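/- arXiv:1710.09000 — 4 statements merged into one kernel-verified Lean document; each statement's English description precedes it below -/
import Mathlib

section
/- The point u* = (1/N)·1 is the unique fixed point of the replicator dynamics with payoff A_N(γ) = L_N + γ M_N in the interior of the simplex Δ_N: if u ∈ int(Δ_N) satisfies (e_i − u)ᵀ A_N(γ) u = 0 for all i, then u = (1/N)·1. -/
/-!
The payoff matrix `A = L_N + γ M_N` is circulant with first row `(0, -1, 1 + γ, -1, …, 1 + γ)`.
At an interior rest point all payoffs `(A u)_i` agree, and subtracting the payoff of strategy
`i + 2` from that of `i` leaves `u_i - (2 + γ) u_{i+1} + (1 + γ) u_{i+2} = 0`. So the increments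
`u_{i+1} - u_i` form a cyclic geometric sequence of ratio `1 / (1 + γ) > 0` summing to zero; they
vanish, and `u` is constant.
-/

/-- The skew-symmetric circulant payoff matrix of the complete odd circulant game:
first row `(0, -1, 1, -1, 1, …, -1, 1)`, each row a cyclic shift of the previous. -/
noncomputable def Lmat (N : ℕ) : Matrix (Fin N) (Fin N) ℝ :=
  Matrix.of fun i j => if i = j then 0 else (-1 : ℝ) ^ ((j.val + N - i.val) % N)

/-- The 0-1 circulant tournament matrix: first row has ones exactly at positions
`3, 5, …, N` (1-indexed), i.e. at even nonzero cyclic offsets. -/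
noncomputable def Mmat (N : ℕ) : Matrix (Fin N) (Fin N) ℝ :=
  Matrix.of fun i j =>
    if i ≠ j ∧ Even ((j.val + N - i.val) % N) then (1 : ℝ) else 0

/-- The `N × N` all-ones matrix. -/
noncomputable def onesMat (N : ℕ) : Matrix (Fin N) (Fin N) ℝ := Matrix.of fun _ _ => (1 : ℝ)

/-- `H = (1/N²)(N(M_N − 1_N) + 1_N)`, the Jacobian of the controlled part of the
replicator dynamics at the interior equilibrium. -/
noncomputable def Hmat (N : ℕ) : Matrix (Fin N) (Fin N) ℝ :=
  ((1 : ℝ) / (N : ℝ) ^ 2) • ((N : ℝ) • (Mmat N - onesMat N) + onesMat N)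

open Matrix

noncomputable def gameRow {N : ℕ} [NeZero N] (γ : ℝ) (d : Fin N) : ℝ :=
  if d = 0 then 0 else if Even (d : ℕ) then 1 + γ else -1

lemma Lmat_add_smul_Mmat_apply {N : ℕ} [NeZero N] (γ : ℝ) (i j : Fin N) :
    (Lmat N + γ • Mmat N) i j = gameRow γ (j - i) := by
  have hoff : (j.val + N - i.val) % N = (j - i : Fin N).val := by
    rw [Fin.val_sub]; congr 1; omega
  have hdiag : (i = j) ↔ (j - i = 0) := by rw [sub_eq_zero, eq_comm]
  simp only [Lmat, Mmat, gameRow, Matrix.add_apply, Matrix.smul_apply, Matrix.of_apply,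
    smul_eq_mul, hoff, ← hdiag]
  by_cases h : i = j
  · simp [h]
  · by_cases he : Even (j - i : Fin N).val
    · simp [h, he, he.neg_one_pow]
    · simp [h, he, (Nat.not_even_iff_odd.1 he).neg_one_pow]

lemma Matrix.mulVec_sub_mulVec_add_of_apply_eq_sub {R : Type*} [CommRing R] {N : ℕ} [NeZero N]
    (A : Matrix (Fin N) (Fin N) R) (c : Fin N → R) (hA : ∀ i j, A i j = c (j - i))
    (u : Fin N → R) (i s : Fin N) :
    (A *ᵥ u) i - (A *ᵥ u) (i + s) = ∑ d, (c d - c (d - s)) * u (i + d) := by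
  have hrow : ∀ j, (A *ᵥ u) j = ∑ d, c d * u (j + d) := fun j => by
    rw [Matrix.mulVec, dotProduct, ← Equiv.sum_comp (Equiv.addLeft j)]
    simp [hA]
  have hshift : (A *ᵥ u) (i + s) = ∑ d, c (d - s) * u (i + d) := by
    rw [hrow, ← Equiv.sum_comp (Equiv.subRight s)]
    simp [add_assoc, add_sub_cancel]
  simp only [hrow i, hshift, sub_mul, Finset.sum_sub_distrib]

lemma Fin.val_sub_two_of_odd {n : ℕ} (hn : 1 ≤ n) (d : Fin (2 * n + 1)) :
    (d - 2 : Fin (2 * n + 1)).val = if 2 ≤ d.val then d.val - 2 else d.val + 2 * n - 1 := by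
  have h2 : (2 : Fin (2 * n + 1)).val = 2 := Nat.mod_eq_of_lt (by omega : 2 < 2 * n + 1)
  rw [Fin.val_sub, h2]
  split_ifs with h
  · rw [show 2 * n + 1 - 2 + d.val = d.val - 2 + (2 * n + 1) by omega, Nat.add_mod_right,
      Nat.mod_eq_of_lt (by omega)]
  · rw [Nat.mod_eq_of_lt (by omega)]
    omega

/-- Shifting by two preserves the parity of every offset except those that wrap around the odd
modulus `2 * n + 1`. -/
lemma gameRow_sub_gameRow_sub_two {n : ℕ} (hn : 1 ≤ n) (γ : ℝ) (d : Fin (2 * n + 1)) :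
    gameRow γ d - gameRow γ (d - 2) =
      (if d = 0 then 1 else 0) - (2 + γ) * (if d = 1 then 1 else 0)
        + (1 + γ) * (if d = 2 then 1 else 0) := by
  have h1 : (1 : Fin (2 * n + 1)).val = 1 := Nat.mod_eq_of_lt (by omega : 1 < 2 * n + 1)
  have h2 : (2 : Fin (2 * n + 1)).val = 2 := Nat.mod_eq_of_lt (by omega : 2 < 2 * n + 1)
  simp only [gameRow, Fin.ext_iff, Fin.val_sub_two_of_odd hn, h1, h2, Fin.val_zero,
    Nat.even_iff]
  split_ifs <;> first | ring1 | (exfalso; omega)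

lemma Lmat_add_smul_Mmat_mulVec_sub_mulVec_add_two {n : ℕ} (hn : 1 ≤ n) (γ : ℝ)
    (u : Fin (2 * n + 1) → ℝ) (i : Fin (2 * n + 1)) :
    ((Lmat (2 * n + 1) + γ • Mmat (2 * n + 1)) *ᵥ u) i
        - ((Lmat (2 * n + 1) + γ • Mmat (2 * n + 1)) *ᵥ u) (i + 2) =
      u i - (2 + γ) * u (i + 1) + (1 + γ) * u (i + 2) := by
  rw [mulVec_sub_mulVec_add_of_apply_eq_sub _ _ (Lmat_add_smul_Mmat_apply γ)]
  simp only [gameRow_sub_gameRow_sub_two hn, sub_mul, add_mul, mul_assoc, ite_mul, one_mul,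
    zero_mul, Finset.sum_add_distrib, Finset.sum_sub_distrib, ← Finset.mul_sum,
    Finset.sum_ite_eq', Finset.mem_univ, if_true, add_zero]

lemma Matrix.mulVec_apply_eq_dotProduct_of_forall_single_sub_dotProduct_eq_zero
    {ι R : Type*} [Fintype ι] [DecidableEq ι] [Ring R] (A : Matrix ι ι R) (u : ι → R)
    (h : ∀ i, (Pi.single i 1 - u) ⬝ᵥ (A *ᵥ u) = 0) (i : ι) :
    (A *ᵥ u) i = u ⬝ᵥ (A *ᵥ u) := by
  have hi := h i
  rwa [sub_dotProduct, single_dotProduct, one_mul, sub_eq_zero] at hi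

lemma Fin.eq_pow_mul_of_forall_add_one_eq_mul {M : Type*} [Monoid M] {m : ℕ}
    (f : Fin (m + 1) → M) (r : M) (h : ∀ i, f (i + 1) = r * f i) (i : Fin (m + 1)) :
    f i = r ^ (i : ℕ) * f 0 := by
  induction i using Fin.induction with
  | zero => simp
  | succ i ih =>
    rw [← Fin.coeSucc_eq_succ, h, ih, Fin.coeSucc_eq_succ, Fin.val_succ, Fin.val_castSucc,
      pow_succ', mul_assoc]

lemma Fin.eq_zero_of_sum_eq_zero_of_forall_add_one_eq_mul {m : ℕ} (D : Fin (m + 1) → ℝ)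
    {r : ℝ} (hr : 0 < r) (h : ∀ i, D (i + 1) = r * D i) (hsum : ∑ i, D i = 0) : D = 0 := by
  have hgeom : (∑ i : Fin (m + 1), r ^ (i : ℕ)) * D 0 = 0 := by
    rw [Finset.sum_mul, ← hsum]
    exact Finset.sum_congr rfl fun i _ => (Fin.eq_pow_mul_of_forall_add_one_eq_mul D r h i).symm
  have hpos : 0 < ∑ i : Fin (m + 1), r ^ (i : ℕ) :=
    Finset.sum_pos (fun i _ => pow_pos hr _) Finset.univ_nonempty
  funext i
  rw [Fin.eq_pow_mul_of_forall_add_one_eq_mul D r h i,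
    (mul_eq_zero.1 hgeom).resolve_left hpos.ne', mul_zero, Pi.zero_apply]

lemma Fin.sum_add_one_sub_eq_zero {M : Type*} [AddCommGroup M] {m : ℕ}
    (u : Fin (m + 1) → M) : ∑ i, (u (i + 1) - u i) = 0 := by
  rw [Finset.sum_sub_distrib, sub_eq_zero]
  exact Equiv.sum_comp (Equiv.addRight 1) u

theorem stmt_10_general (n : ℕ) (hn : 1 ≤ n) (γ : ℝ) (hγ : γ > -1)
    (u : Fin (2 * n + 1) → ℝ) (hsum : ∑ i, u i = 1)
    (hfix : ∀ i : Fin (2 * n + 1),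
      dotProduct (Pi.single i 1 - u)
        ((Lmat (2 * n + 1) + γ • Mmat (2 * n + 1)).mulVec u) = 0) :
    u = fun _ => (1 : ℝ) / (2 * n + 1) := by
  have hpayoff := mulVec_apply_eq_dotProduct_of_forall_single_sub_dotProduct_eq_zero _ u hfix
  have hγ_pos : 0 < 1 + γ := by linarith
  have hstep : ∀ i, u (i + 1 + 1) - u (i + 1) = (1 + γ)⁻¹ * (u (i + 1) - u i) := fun i => by
    have h := Lmat_add_smul_Mmat_mulVec_sub_mulVec_add_two hn γ u i
    have h2 : i + 2 = i + 1 + 1 := by rw [add_assoc]; congr 1; ext; simp [Fin.val_add]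
    rw [hpayoff, hpayoff, sub_self, h2] at h
    field_simp
    linear_combination -h
  have hdiff := Fin.eq_zero_of_sum_eq_zero_of_forall_add_one_eq_mul (fun i => u (i + 1) - u i)
    (inv_pos.2 hγ_pos) hstep (Fin.sum_add_one_sub_eq_zero u)
  have hconst : ∀ i, u i = u 0 := fun i => by
    simpa using Fin.eq_pow_mul_of_forall_add_one_eq_mul u 1
      (fun j => by simpa [sub_eq_zero] using congrFun hdiff j) i
  have hu0 : (2 * n + 1 : ℝ) * u 0 = 1 := by
    simpa [hconst _] using hsum
  funext i
  rw [hconst i, eq_div_iff (by positivity), mul_comm, hu0]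

/-- `u* = (1/N)·1` is the unique interior fixed point: if `u` is in the interior of the
simplex and `(e_i − u)ᵀ A_N(γ) u = 0` for all `i`, then `u = (1/N)·1`. -/
theorem stmt_10 (n : ℕ) (hn : 1 ≤ n) (γ : ℝ) (hγ : γ > -1)
    (u : Fin (2 * n + 1) → ℝ) (hsum : ∑ i, u i = 1) (hpos : ∀ i, 0 < u i)
    (hfix : ∀ i : Fin (2 * n + 1),
      dotProduct (Pi.single i 1 - u)
        ((Lmat (2 * n + 1) + γ • Mmat (2 * n + 1)).mulVec u) = 0) :
    u = fun _ => (1 : ℝ) / (2 * n + 1) :=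
  stmt_10_general n hn γ hγ u hsum hfix
end

section
/- With H = (1/N²)(N(M_N − 1_N) + 1_N) and N = 2n+1, the matrix identity HᵀH + HH + H = (n/N²)(2M_N − 1_N) holds; consequently for every x ∈ ℝ^N, xᵀ(HᵀH + HH + H)x = −(n/N²)||x||². -/
open Matrix

/-! Write `J` for the all-ones matrix and `K = N(M - J) + J`, so that `H = K / N²`. The tournament
relation `Mᵀ = J - I - M` gives `Kᵀ + K = -N I + (2 - N) J`, and equal column sums `n` give
`J K = -n N J`. Hence `HᵀH + HH = (Kᵀ + K) K / N⁴` is a combination of `K` and `J`, and adding `H`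
leaves `(n/N²)(2M - J)`. Finally `2M - J = (M - Mᵀ) - I`, and the quadratic form of the
skew-symmetric part `M - Mᵀ` vanishes. -/

lemma onesMat_transpose (N : ℕ) : (onesMat N)ᵀ = onesMat N := rfl

lemma onesMat_mul_onesMat (N : ℕ) : onesMat N * onesMat N = (N : ℝ) • onesMat N := by
  ext i j
  simp [onesMat, mul_apply]

theorem dotProduct_sub_transpose_mulVec {ι : Type*} [Fintype ι] (A : Matrix ι ι ℝ) (x : ι → ℝ) :
    x ⬝ᵥ (A - Aᵀ) *ᵥ x = 0 := by
  rw [sub_mulVec, dotProduct_sub, mulVec_transpose, dotProduct_mulVec, dotProduct_comm, sub_self]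

section RegularTournament

variable {n : ℕ} {M : Matrix (Fin (2 * n + 1)) (Fin (2 * n + 1)) ℝ}

theorem jacobian_identity_of_regular_tournament
    (hT : Mᵀ = onesMat (2 * n + 1) - 1 - M)
    (hJM : onesMat (2 * n + 1) * M = (n : ℝ) • onesMat (2 * n + 1))
    {H : Matrix (Fin (2 * n + 1)) (Fin (2 * n + 1)) ℝ}
    (hH : H = ((1 : ℝ) / ((2 * n + 1 : ℕ) : ℝ) ^ 2) •
      (((2 * n + 1 : ℕ) : ℝ) • (M - onesMat (2 * n + 1)) + onesMat (2 * n + 1))) :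
    Hᵀ * H + H * H + H =
      ((n : ℝ) / (2 * n + 1 : ℝ) ^ 2) • ((2 : ℝ) • M - onesMat (2 * n + 1)) := by
  have hJt := onesMat_transpose (2 * n + 1)
  have hJJ := onesMat_mul_onesMat (2 * n + 1)
  set J := onesMat (2 * n + 1)
  set N : ℝ := ((2 * n + 1 : ℕ) : ℝ) with hN
  set K := N • (M - J) + J
  have hsym : Kᵀ + K = -N • (1 : Matrix _ _ ℝ) + (2 - N) • J := by
    simp only [K, transpose_add, transpose_smul, transpose_sub, hT, hJt]
    module
  have hJK : J * K = -((n : ℝ) * N) • J := by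
    simp only [K, Matrix.mul_add, Matrix.mul_smul, Matrix.mul_sub, hJM, hJJ]
    match_scalars
    push_cast [hN]
    ring
  have hquad : Hᵀ * H + H * H = (1 / N ^ 4) • ((Kᵀ + K) * K) := by
    rw [hH, Matrix.add_mul, transpose_smul, smul_mul_smul_comm, smul_mul_smul_comm, ← smul_add]
    congr 1
    ring
  have hN0 : N ≠ 0 := by positivity
  rw [hquad, hsym, Matrix.add_mul, smul_mul, smul_mul, hJK, Matrix.one_mul, hH]
  simp only [K, smul_smul]
  push_cast [hN]
  match_scalars <;> field_simp <;> ring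

theorem dotProduct_two_smul_sub_onesMat_mulVec (hT : Mᵀ = onesMat (2 * n + 1) - 1 - M)
    (x : Fin (2 * n + 1) → ℝ) :
    x ⬝ᵥ ((2 : ℝ) • M - onesMat (2 * n + 1)) *ᵥ x = -∑ i, x i ^ 2 := by
  have hskew : (2 : ℝ) • M - onesMat (2 * n + 1) = (M - Mᵀ) - 1 := by
    rw [hT]; module
  rw [hskew, sub_mulVec, dotProduct_sub, dotProduct_sub_transpose_mulVec, one_mulVec, zero_sub]
  simp [dotProduct, sq]

end RegularTournament

lemma Mmat_apply {N : ℕ} [NeZero N] (i j : Fin N) :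
    Mmat N i j = if j - i ≠ 0 ∧ Even (j - i).val then 1 else 0 := by
  have hval : (j - i).val = (j.val + N - i.val) % N := by
    rw [Fin.val_sub]; congr 1; omega
  simp only [Mmat, of_apply, hval, ne_eq, sub_eq_zero, eq_comm (a := j)]

lemma even_val_neg_iff {n : ℕ} {d : Fin (2 * n + 1)} (hd : d ≠ 0) :
    Even (-d).val ↔ ¬ Even d.val := by
  have hlt := d.isLt
  rw [Fin.val_neg, if_neg hd, Nat.even_iff, Nat.even_iff]
  omega

lemma Mmat_transpose (n : ℕ) :
    (Mmat (2 * n + 1))ᵀ = onesMat (2 * n + 1) - 1 - Mmat (2 * n + 1) := by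
  ext i j
  have hneg : i - j = -(j - i) := (neg_sub j i).symm
  rw [transpose_apply, Matrix.sub_apply, Matrix.sub_apply, one_apply, Mmat_apply, Mmat_apply, hneg]
  by_cases hij : j - i = 0
  · simp [(sub_eq_zero.mp hij).symm, onesMat]
  · have hji : i ≠ j := fun h => hij (by rw [h, sub_self])
    simp only [ne_eq, neg_eq_zero, hij, not_false_eq_true, true_and, even_val_neg_iff hij, hji,
      onesMat, of_apply, if_false]
    by_cases he : Even (j - i).val <;> simp [he]

lemma sum_range_ite_ne_zero_even (n : ℕ) :
    ∑ v ∈ Finset.range (2 * n + 1), (if v ≠ 0 ∧ Even v then (1 : ℝ) else 0) = n := by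
  induction n with
  | zero => simp
  | succ m ih =>
    rw [show 2 * (m + 1) + 1 = 2 * m + 1 + 1 + 1 by ring, Finset.sum_range_succ,
      Finset.sum_range_succ, ih]
    have hodd : ¬ Even (2 * m + 1) := by simp
    have heven : Even (2 * m + 1 + 1) := ⟨m + 1, by ring⟩
    simp [hodd, heven]

lemma onesMat_mul_Mmat (n : ℕ) :
    onesMat (2 * n + 1) * Mmat (2 * n + 1) = (n : ℝ) • onesMat (2 * n + 1) := by
  ext i j
  set f : Fin (2 * n + 1) → ℝ := fun d => if d ≠ 0 ∧ Even d.val then 1 else 0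
  have hcol : ∑ k, Mmat (2 * n + 1) k j = n :=
    calc ∑ k, Mmat (2 * n + 1) k j = ∑ k, f (Equiv.subLeft j k) := by simp only [Mmat_apply]; rfl
      _ = ∑ d, f d := Equiv.sum_comp _ f
      _ = n := by
        simp only [f, ne_eq, ← Fin.val_eq_zero_iff]
        exact (Fin.sum_univ_eq_sum_range (fun v => if ¬v = 0 ∧ Even v then (1 : ℝ) else 0) _).trans
          (sum_range_ite_ne_zero_even n)
  simp [onesMat, mul_apply, hcol]

theorem stmt_12_general (n : ℕ) :
    (Hmat (2 * n + 1))ᵀ * Hmat (2 * n + 1) + Hmat (2 * n + 1) * Hmat (2 * n + 1)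
        + Hmat (2 * n + 1) =
      ((n : ℝ) / (2 * n + 1 : ℝ) ^ 2) • ((2 : ℝ) • Mmat (2 * n + 1) - onesMat (2 * n + 1)) ∧
    ∀ x : Fin (2 * n + 1) → ℝ,
      dotProduct x
        (((Hmat (2 * n + 1))ᵀ * Hmat (2 * n + 1) + Hmat (2 * n + 1) * Hmat (2 * n + 1)
          + Hmat (2 * n + 1)).mulVec x) =
        -((n : ℝ) / (2 * n + 1 : ℝ) ^ 2) * ∑ i, x i ^ 2 := by
  have hid := jacobian_identity_of_regular_tournament (H := Hmat (2 * n + 1))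
    (Mmat_transpose n) (onesMat_mul_Mmat n) rfl
  refine ⟨hid, fun x => ?_⟩
  rw [hid, smul_mulVec, dotProduct_smul,
    dotProduct_two_smul_sub_onesMat_mulVec (Mmat_transpose n), smul_eq_mul, neg_mul_comm]

/-- The matrix identity `HᵀH + HH + H = (n/N²)(2M_N − 1_N)`, and consequently
`xᵀ(HᵀH + HH + H)x = −(n/N²)‖x‖²` for every `x`. -/
theorem stmt_12 (n : ℕ) (hn : 1 ≤ n) :
    (Hmat (2 * n + 1))ᵀ * Hmat (2 * n + 1) + Hmat (2 * n + 1) * Hmat (2 * n + 1)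
        + Hmat (2 * n + 1) =
      ((n : ℝ) / (2 * n + 1 : ℝ) ^ 2) • ((2 : ℝ) • Mmat (2 * n + 1) - onesMat (2 * n + 1)) ∧
    ∀ x : Fin (2 * n + 1) → ℝ,
      dotProduct x
        (((Hmat (2 * n + 1))ᵀ * Hmat (2 * n + 1) + Hmat (2 * n + 1) * Hmat (2 * n + 1)
          + Hmat (2 * n + 1)).mulVec x) =
        -((n : ℝ) / (2 * n + 1 : ℝ) ^ 2) * ∑ i, x i ^ 2 :=
  stmt_12_general n
end

section
/- Let J = (1/N)L_N and H as above. The eigenvalues λ_j of the circulant matrix 𝒥 = J + γH satisfy Re(λ_j) = −(γ/N²)(n + 1/2) for j = 1, ..., N−1 and λ_0 = −γ n(2n+1)/N². Hence if γ > 0 all eigenvalues of 𝒥 have negative real part, and if γ < 0 all have positive real part. -/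
open Matrix

/-! The first row of `𝒥` is `k ↦ a + b (-1)^k + c [k = 0]`, so
`λ_j = b ∑ (-ω_j)^k + a ∑ ω_j^k + c`. For `0 < j < N`, `ω_j` is an `N`-th root of unity other
than `1`, hence `∑ ω_j^k = 0`; as `N` is odd, `∑ (-ω_j)^k = 2 / (1 + ω_j)`, whose real part is
`1` since `|ω_j| = 1`. So `Re λ_j = b + c` does not depend on `j`, and `λ_0 = b + a N + c`. -/

open Finset ComplexConjugate

lemma Complex.re_geom_sum_neg_eq_one {N : ℕ} (hN : Odd N) {z : ℂ} (hz : z ^ N = 1) :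
    (∑ m ∈ range N, (-z) ^ m).re = 1 := by
  have hz0 : z ≠ 0 := by rintro rfl; simp [hN.pos.ne'] at hz
  have hz1 : 1 + z ≠ 0 := by
    intro h
    rw [show z = -1 by linear_combination h, hN.neg_one_pow] at hz
    norm_num at hz
  have hneg : -z - 1 ≠ 0 := by contrapose! hz1; linear_combination -hz1
  have hsum : ∑ m ∈ range N, (-z) ^ m = 2 / (1 + z) := by
    rw [geom_sum_eq (by contrapose! hneg; rw [hneg]; ring), hN.neg_pow, hz,
      div_eq_div_iff hneg hz1]
    ring
  -- `z` lies on the unit circle, so `conj z = z⁻¹` and `2 / (1 + z)` plus its conjugate is `2`.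
  have hconj : conj z = z⁻¹ :=
    (Complex.inv_eq_conj (Complex.norm_eq_one_of_pow_eq_one hz hN.pos.ne')).symm
  have hinv : 1 + z⁻¹ ≠ 0 := by
    rw [show 1 + z⁻¹ = (1 + z) / z by field_simp; ring]
    exact div_ne_zero hz1 hz0
  have key : ((2 * (∑ m ∈ range N, (-z) ^ m).re : ℝ) : ℂ) = (2 * 1 : ℝ) := by
    have hconj_sum : (2 : ℂ) / (1 + z⁻¹) = 2 * z / (1 + z) := by
      rw [div_eq_div_iff hinv hz1]
      field_simp
      ring
    rw [← Complex.add_conj, hsum, map_div₀, map_add, map_one, map_ofNat, hconj, hconj_sum,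
      ← add_div, div_eq_iff hz1]
    push_cast
    ring
  exact (mul_right_inj' two_ne_zero).mp (Complex.ofReal_injective key)

lemma Complex.exp_two_pi_I_mul_mul_div (j k N : ℕ) :
    Complex.exp (2 * Real.pi * Complex.I * j * k / N) =
        (Complex.exp (2 * Real.pi * Complex.I / N) ^ j) ^ k := by
  rw [← pow_mul, ← Complex.exp_nat_mul]
  push_cast
  ring_nf

lemma Lmat_zero_apply (N : ℕ) [NeZero N] (k : Fin N) :
    Lmat N 0 k = (-1) ^ (k : ℕ) - if (k : ℕ) = 0 then 1 else 0 := by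
  rcases eq_or_ne k 0 with rfl | hk0
  · simp [Lmat]
  · simp [Lmat, Ne.symm hk0, Fin.val_ne_zero_iff.mpr hk0, Nat.mod_eq_of_lt k.isLt]

lemma Mmat_zero_apply (N : ℕ) [NeZero N] (k : Fin N) :
    Mmat N 0 k = (1 + (-1) ^ (k : ℕ)) / 2 - if (k : ℕ) = 0 then 1 else 0 := by
  have hk : ((k : ℕ) + N - ((0 : Fin N) : ℕ)) % N = k := by simp [Nat.mod_eq_of_lt k.isLt]
  rcases eq_or_ne k 0 with rfl | hk0
  · simp [Mmat]
  · simp only [Mmat, of_apply, hk, ne_eq, Ne.symm hk0, not_false_eq_true, true_and,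
      Fin.val_ne_zero_iff.mpr hk0, if_false, sub_zero]
    rcases Nat.even_or_odd (k : ℕ) with he | ho
    · simp [he, he.neg_one_pow]
    · simp [Nat.not_even_iff_odd.mpr ho, ho.neg_one_pow]

noncomputable def jacobian (N : ℕ) (γ : ℝ) : Matrix (Fin N) (Fin N) ℝ :=
  ((1 : ℝ) / N) • Lmat N + γ • Hmat N

lemma sum_jacobian_row_zero_mul_pow (N : ℕ) [NeZero N] (γ : ℝ) (z : ℂ) :
    ∑ k : Fin N, (jacobian N γ 0 k : ℂ) * z ^ (k : ℕ) =
      ((1 / N + γ / (2 * N) : ℝ) : ℂ) * ∑ m ∈ range N, (-z) ^ m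
        + ((γ / N ^ 2 - γ / (2 * N) : ℝ) : ℂ) * ∑ m ∈ range N, z ^ m
        + ((-(1 + γ) / N : ℝ) : ℂ) := by
  have hN : (N : ℂ) ≠ 0 := Nat.cast_ne_zero.mpr (NeZero.ne N)
  have hrow : ∀ k : Fin N, (jacobian N γ 0 k : ℂ) * z ^ (k : ℕ) =
      ((1 / N + γ / (2 * N) : ℝ) : ℂ) * (-z) ^ (k : ℕ)
        + ((γ / N ^ 2 - γ / (2 * N) : ℝ) : ℂ) * z ^ (k : ℕ)
        + if (k : ℕ) = 0 then ((-(1 + γ) / N : ℝ) : ℂ) else 0 := by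
    intro k
    simp only [jacobian, Matrix.add_apply, Matrix.smul_apply, smul_eq_mul, Hmat, Matrix.sub_apply,
      onesMat, of_apply, Lmat_zero_apply, Mmat_zero_apply]
    rw [neg_pow]
    split_ifs with hk
    · rw [hk]
      push_cast
      field_simp
      ring
    · push_cast
      field_simp
      ring
  simp only [hrow]
  rw [Fin.sum_univ_eq_sum_range (fun m => ((1 / N + γ / (2 * N) : ℝ) : ℂ) * (-z) ^ m
        + ((γ / N ^ 2 - γ / (2 * N) : ℝ) : ℂ) * z ^ m
        + if m = 0 then ((-(1 + γ) / N : ℝ) : ℂ) else 0),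
    sum_add_distrib, sum_add_distrib, ← mul_sum, ← mul_sum, sum_ite_eq',
    if_pos (mem_range.mpr (Nat.pos_of_neZero N))]

lemma sum_jacobian_row_zero_mul_one_pow {N : ℕ} [NeZero N] (hN : Odd N) (γ : ℝ) :
    ∑ k : Fin N, (jacobian N γ 0 k : ℂ) * 1 ^ (k : ℕ) =
      ((γ * (1 - N) / (2 * N) : ℝ) : ℂ) := by
  have hN0 : (N : ℝ) ≠ 0 := NeZero.ne _
  have halt : ∑ m ∈ range N, (-1 : ℂ) ^ m = 1 := by
    rw [geom_sum_eq (by norm_num), hN.neg_one_pow]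
    norm_num
  rw [sum_jacobian_row_zero_mul_pow, halt]
  simp only [one_pow, sum_const, card_range, nsmul_eq_mul, mul_one]
  push_cast
  field_simp
  ring

lemma re_sum_jacobian_row_zero_mul_pow_of_pow_eq_one {N : ℕ} [NeZero N] (hN : Odd N) (γ : ℝ)
    {z : ℂ} (hz : z ^ N = 1) (hz1 : z ≠ 1) :
    (∑ k : Fin N, (jacobian N γ 0 k : ℂ) * z ^ (k : ℕ)).re = -γ / (2 * N) := by
  have hN0 : (N : ℝ) ≠ 0 := NeZero.ne _
  have hroots : ∑ m ∈ range N, z ^ m = 0 := by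
    rw [geom_sum_eq hz1, hz, sub_self, zero_div]
  rw [sum_jacobian_row_zero_mul_pow, hroots]
  simp only [Complex.add_re, Complex.re_ofReal_mul, Complex.ofReal_re, mul_zero, add_zero,
    Complex.re_geom_sum_neg_eq_one hN hz]
  field_simp
  ring

/-- Eigenvalues of the circulant Jacobian `𝒥 = (1/N)L_N + γH`: the eigenvalue
`λ_j = ∑_k 𝒥_{0,k} ω_j^k` (with `ω_j = e^{2πij/N}`) satisfies
`Re(λ_0) = −γ n(2n+1)/N²` and `Re(λ_j) = −(γ/N²)(n + 1/2)` for `1 ≤ j ≤ N−1`;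
hence all eigenvalues have negative real part when `γ > 0` and positive real part
when `γ < 0`. -/
theorem stmt_13 (n : ℕ) (hn : 1 ≤ n) (γ : ℝ) :
    let N := 2 * n + 1
    let J : Matrix (Fin N) (Fin N) ℝ := ((1 : ℝ) / (N : ℝ)) • Lmat N + γ • Hmat N
    let lam : ℕ → ℂ := fun j => ∑ k : Fin N,
      (J 0 k : ℂ) * Complex.exp (2 * (Real.pi : ℂ) * Complex.I * (j : ℂ) * (k.val : ℂ) / (N : ℂ))
    (lam 0).re = -γ * n * (2 * n + 1) / (N : ℝ) ^ 2 ∧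
    (∀ j : ℕ, 1 ≤ j → j ≤ N - 1 → (lam j).re = -(γ / (N : ℝ) ^ 2) * ((n : ℝ) + 1 / 2)) ∧
    (γ > 0 → ∀ j : ℕ, j ≤ N - 1 → (lam j).re < 0) ∧
    (γ < 0 → ∀ j : ℕ, j ≤ N - 1 → (lam j).re > 0) := by
  intro N J lam
  have hN : Odd N := odd_two_mul_add_one n
  have hNcast : (N : ℝ) = 2 * n + 1 := by push_cast [N]; ring
  have hζ := Complex.isPrimitiveRoot_exp N hN.pos.ne'
  have hlam : ∀ j, lam j = ∑ k : Fin N, (jacobian N γ 0 k : ℂ) *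
      (Complex.exp (2 * Real.pi * Complex.I / N) ^ j) ^ (k : ℕ) := fun j => by
    simp only [lam, J, jacobian, Complex.exp_two_pi_I_mul_mul_div]
  have hlam0 : (lam 0).re = -γ * n * (2 * n + 1) / (N : ℝ) ^ 2 := by
    rw [hlam, pow_zero, sum_jacobian_row_zero_mul_one_pow hN, Complex.ofReal_re, hNcast]
    field_simp
    ring
  have hlamj : ∀ j, 1 ≤ j → j ≤ N - 1 →
      (lam j).re = -(γ / (N : ℝ) ^ 2) * ((n : ℝ) + 1 / 2) := by
    intro j hj1 hjN
    rw [hlam, re_sum_jacobian_row_zero_mul_pow_of_pow_eq_one hN γ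
      (by rw [pow_right_comm, hζ.pow_eq_one, one_pow])
      (hζ.pow_ne_one_of_pos_of_lt (by omega) (by omega)), hNcast]
    field_simp
  have hsign : ∀ j, j ≤ N - 1 → ∃ c : ℝ, 0 < c ∧ (lam j).re = -(γ * c) := by
    have hn0 : (0 : ℝ) < n := by exact_mod_cast hn
    intro j hjN
    rcases Nat.eq_zero_or_pos j with rfl | hj1
    · exact ⟨n * (2 * n + 1) / (N : ℝ) ^ 2, by positivity, by rw [hlam0]; ring⟩
    · exact ⟨(n + 1 / 2) / (N : ℝ) ^ 2, by positivity, by rw [hlamj j hj1 hjN]; ring⟩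
  refine ⟨hlam0, hlamj, fun hγ j hj => ?_, fun hγ j hj => ?_⟩ <;>
    obtain ⟨c, hc, hre⟩ := hsign j hj <;> rw [hre]
  · linarith [mul_pos hγ hc]
  · linarith [mul_pos_of_neg_of_neg hγ (neg_neg_of_pos hc)]
end

section
/- Consider smooth vector fields F, G : ℝ^n → ℝ^n and smooth scalars F₀, G₀ : ℝ^n → ℝ, r > 0. Suppose (x, λ, γ) satisfy the Euler–Lagrange system: ẋ = F(x) + γG(x), λ̇ = −∇F₀(x) − γ∇G₀(x) − (DF)ᵀλ − γ(DG)ᵀλ, and γ = −(1/r)(λᵀG(x) + G₀(x)). If the Lie bracket [F,G] = (DF)G − (DG)F vanishes identically, then γ̇ = (1/r)((∇F₀(x))ᵀG(x) − (∇G₀(x))ᵀF(x)). -/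
/-- For the optimal control problem with dynamics `ẋ = F(x) + γG(x)`, costate dynamics
`λ̇ = −∇F₀ − γ∇G₀ − (DF)ᵀλ − γ(DG)ᵀλ` and optimal control
`γ = −(1/r)(λᵀG(x) + G₀(x))`, if the Lie bracket `[F,G] = (DF)G − (DG)F` vanishes
identically, then `γ̇ = (1/r)((∇F₀)ᵀG(x) − (∇G₀)ᵀF(x))`. -/
theorem stmt_14 (m : ℕ) (r : ℝ) (hr : 0 < r)
    (F G : EuclideanSpace ℝ (Fin m) → EuclideanSpace ℝ (Fin m))
    (F0 G0 : EuclideanSpace ℝ (Fin m) → ℝ)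
    (hF : ContDiff ℝ (⊤ : ℕ∞) F) (hG : ContDiff ℝ (⊤ : ℕ∞) G)
    (hF0 : ContDiff ℝ (⊤ : ℕ∞) F0) (hG0 : ContDiff ℝ (⊤ : ℕ∞) G0)
    (x l : ℝ → EuclideanSpace ℝ (Fin m)) (γ : ℝ → ℝ)
    (hbracket : ∀ p, fderiv ℝ F p (G p) - fderiv ℝ G p (F p) = 0)
    (hx : ∀ t, HasDerivAt x (F (x t) + γ t • G (x t)) t)
    (hl : ∀ t, HasDerivAt l
      (-(gradient F0 (x t)) - γ t • gradient G0 (x t)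
        - (ContinuousLinearMap.adjoint (fderiv ℝ F (x t))) (l t)
        - γ t • (ContinuousLinearMap.adjoint (fderiv ℝ G (x t))) (l t)) t)
    (hγ : ∀ t, γ t = -(1 / r) * ((inner ℝ (l t) (G (x t)) : ℝ) + G0 (x t)))
    (t : ℝ) :
    HasDerivAt γ ((1 / r) * ((inner ℝ (gradient F0 (x t)) (G (x t)) : ℝ)
      - (inner ℝ (gradient G0 (x t)) (F (x t)) : ℝ))) t := by
  set p := x t with hp
  set x' : EuclideanSpace ℝ (Fin m) := F p + γ t • G p with hx'
  have hGx : HasDerivAt (fun s => G (x s)) (fderiv ℝ G p x') t :=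
    ((hG.differentiable (by simp) p).hasFDerivAt).comp_hasDerivAt t (hx t)
  have hinner : HasDerivAt (fun s => (inner ℝ (l s) (G (x s)) : ℝ))
      ((inner ℝ (l t) (fderiv ℝ G p x') : ℝ) +
        (inner ℝ (-(gradient F0 p) - γ t • gradient G0 p
          - (ContinuousLinearMap.adjoint (fderiv ℝ F p)) (l t)
          - γ t • (ContinuousLinearMap.adjoint (fderiv ℝ G p)) (l t)) (G p) : ℝ)) t :=
    (hl t).inner ℝ hGx
  have hG0d : HasDerivAt (fun s => G0 (x s)) ((inner ℝ (gradient G0 p) x' : ℝ)) t := by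
    have := ((hG0.differentiable (by simp) p).hasGradientAt.hasFDerivAt).comp_hasDerivAt t (hx t)
    simp [hx'] at this ⊢
    exact this
  have hsum := ((hinner.add hG0d).const_mul (-(1 / r)))
  have hfun : γ = fun s => -(1 / r) * ((inner ℝ (l s) (G (x s)) : ℝ) + G0 (x s)) :=
    funext hγ
  rw [hfun]
  convert hsum using 1
  · rfl
  · rfl
  · rfl
  have hbr : fderiv ℝ F p (G p) = fderiv ℝ G p (F p) := sub_eq_zero.mp (hbracket p)
  simp only [hx', map_add, map_smul, inner_add_right, inner_sub_left, inner_neg_left,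
    inner_smul_left, inner_smul_right, ContinuousLinearMap.adjoint_inner_left,
    RCLike.conj_to_real, conj_trivial, hbr]
  ring
end
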